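/- arXiv:2101.07991 — 9 statements merged into one kernel-verified Lean document; each statement's English description precedes it below -/
import Mathlib

section
/- C_p(G,X) is a second-countable topological space, and a sequence φ_n converges to φ in C_p(G,X) if and only if for every compact subset K ⊆ dom φ one has K ⊆ dom φ_n for all sufficiently large n and sup_{t∈K} d(φ_n(t), φ(t)) → 0 as n → ∞. -/
open Set Filter Topology TopologicalSpace

namespace Yorke

/-- The space `X̂ = X ∪ {ω}`, encoded as `Option X` with `ω = none`.  Its open sets are
`X̂` itself together with the open sets of `X`. -/
instance hatTopology (X : Type*) [TopologicalSpace X] : TopologicalSpace (Option X) :=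
  TopologicalSpace.generateFrom
    ({Set.univ} ∪ {s : Set (Option X) | ∃ u : Set X, IsOpen u ∧ s = (Option.some : X → Option X) '' u})

/-- The space `C_p(G,X)` of partial maps from `G` to `X` (continuous maps defined on a
nonempty open subset of `G`), encoded via the bijection `μ` with the subspace
`{f : C(G,X̂) | f⁻¹(X) ≠ ∅}` of `C(G,X̂)`; it carries the compact-open topology. -/
abbrev Cp (G X : Type*) [TopologicalSpace G] [TopologicalSpace X] : Type _ :=
  {f : C(G, Option X) // {g : G | f g ≠ none}.Nonempty}

variable {G X : Type*} [TopologicalSpace G] [TopologicalSpace X]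

/-- The domain of a partial map. -/
def dom (φ : Cp G X) : Set G := {g : G | φ.1 g ≠ none}

/-- A partial map with nonempty connected domain is maximally defined if every partial map
with nonempty connected domain which extends it is equal to it. -/
def MaximallyDefined (φ : Cp G X) : Prop :=
  IsConnected (dom φ) ∧
    ∀ ψ : Cp G X, IsConnected (dom ψ) → dom φ ⊆ dom ψ →
      (∀ g ∈ dom φ, φ.1 g = ψ.1 g) → φ = ψ

/-- The space `C_s(G,X)` of maximally defined partial maps, with the subspace topology. -/
abbrev Cs (G X : Type*) [TopologicalSpace G] [TopologicalSpace X] : Type _ :=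
  {φ : Cp G X // MaximallyDefined φ}

/-- The orbit `O(φ) = {φ(g) : g ∈ dom φ}`. -/
def orbit (φ : Cs G X) : Set X := {x : X | ∃ g : G, φ.1.1 g = some x}

/-- The star-construction `S*W = {(g,φ) : φ ∈ S, g ∈ dom φ, (g,φ(g)) ∈ W}`. -/
def star (S : Set (Cs G X)) (W : Set (G × X)) : Set (G × Cs G X) :=
  {p : G × Cs G X | p.2 ∈ S ∧ ∃ x : X, p.2.1.1 p.1 = some x ∧ (p.1, x) ∈ W}

/-- `S` satisfies the compactness axiom if `S*W` is compact for every compact `W`. -/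
def CompactnessAxiom (S : Set (Cs G X)) : Prop :=
  ∀ W : Set (G × X), IsCompact W → IsCompact (star S W)

/-- `S` satisfies the existence axiom on `W` if `S*{(t,x)}` is nonempty for all `(t,x) ∈ W`. -/
def ExistenceAxiom (S : Set (Cs G X)) (W : Set (G × X)) : Prop :=
  ∀ p ∈ W, (star S {p}).Nonempty

/-- `S` satisfies the uniqueness axiom on `W` if `S*{(t,x)}` is empty or a singleton. -/
def UniquenessAxiom (S : Set (Cs G X)) (W : Set (G × X)) : Prop :=
  ∀ p ∈ W, (star S {p}).Subsingleton

section GroupPart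

variable {G X : Type*} [TopologicalSpace X] [Group G] [TopologicalSpace G] [IsTopologicalGroup G]

/-- The shift `σ(g,φ)`, the partial map `x ↦ φ(xg)` with domain `(dom φ)g⁻¹`. -/
def shift (g : G) (φ : Cp G X) : Cp G X :=
  ⟨⟨fun x => φ.1 (x * g), φ.1.continuous.comp (continuous_mul_right g)⟩, by
    obtain ⟨g₀, hg₀⟩ := φ.2
    exact ⟨g₀ * g⁻¹, by simpa [inv_mul_cancel_right] using hg₀⟩⟩

/-- `S ⊆ C_s(G,X)` is `σ`-invariant if `σ(g,φ) ∈ S` for all `g ∈ G`, `φ ∈ S`. -/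
def SigmaInvariant (S : Set (Cs G X)) : Prop :=
  ∀ (g : G) (φ : Cs G X), φ ∈ S → ∃ ψ : Cs G X, ψ ∈ S ∧ ψ.1 = shift g φ.1

/-- `A ⊆ X` is weakly invariant with respect to `S` if every `x ∈ A` is the value at the
identity of some `φ ∈ S` with `O(φ) ⊆ A`. -/
def WeaklyInvariant (S : Set (Cs G X)) (A : Set X) : Prop :=
  ∀ x ∈ A, ∃ φ ∈ S, φ.1.1 (1 : G) = some x ∧ orbit φ ⊆ A

/-- `x` is an equilibrium of `S` if some `φ ∈ S` has `φ(e) = x` and `O(φ) = {x}`. -/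
def Equilibrium (S : Set (Cs G X)) (x : X) : Prop :=
  ∃ φ ∈ S, φ.1.1 (1 : G) = some x ∧ orbit φ = {x}

/-- The set of motions `{π(·,x) : x ∈ X} ⊆ C_s(G,X)` of a `G`-action `π`. -/
def actionSet (π : G × X → X) : Set (Cs G X) :=
  {φ : Cs G X | ∃ x : X, ∀ g : G, φ.1.1 g = some (π (g, x))}

end GroupPart

/-- An isomorphism `<H,k,η> : S*W → S'*W'` of star-constructions: the three maps are
homeomorphisms satisfying `ev ∘ H = k ∘ ev` and `p ∘ H = η ∘ p`. -/
structure StarIso {G X G' X' : Type*} [TopologicalSpace G] [TopologicalSpace X]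
    [TopologicalSpace G'] [TopologicalSpace X']
    (S : Set (Cs G X)) (W : Set (G × X)) (S' : Set (Cs G' X')) (W' : Set (G' × X')) where
  H : ↥(star S W) ≃ₜ ↥(star S' W')
  k : ↥W ≃ₜ ↥W'
  η : ↥S ≃ₜ ↥S'
  ev_comm : ∀ (q : ↥(star S W)) (x : X), q.1.2.1.1 q.1.1 = some x →
      ∀ hW : (q.1.1, x) ∈ W, ∀ x' : X', (H q).1.2.1.1 (H q).1.1 = some x' →
      ((k ⟨(q.1.1, x), hW⟩ : ↥W') : G' × X') = ((H q).1.1, x')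
  p_comm : ∀ q : ↥(star S W), (H q).1.2 = ((η ⟨q.1.2, q.2.1⟩ : ↥S') : Cs G' X')

/-- A map `k = (τ,h) : W → W'` preserves phase space if `h(g,x)` does not depend on `g`. -/
def PreservesPhase {G X G' X' : Type*} [TopologicalSpace G] [TopologicalSpace X]
    [TopologicalSpace G'] [TopologicalSpace X'] {W : Set (G × X)} {W' : Set (G' × X')}
    (k : ↥W → ↥W') : Prop :=
  ∀ w w' : ↥W, (w : G × X).2 = (w' : G × X).2 →
    ((k w : ↥W') : G' × X').2 = ((k w' : ↥W') : G' × X').2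

/-- Two continuous maps are isotopic if they are connected by a continuous family of
homeomorphisms parametrized by `[0,1]`. -/
def Isotopic {A B : Type*} [TopologicalSpace A] [TopologicalSpace B] (f₀ f₁ : A → B) : Prop :=
  ∃ F : unitInterval × A → B, Continuous F ∧ (∀ a, F (0, a) = f₀ a) ∧
    (∀ a, F (1, a) = f₁ a) ∧ ∀ s : unitInterval, IsHomeomorph fun a => F (s, a)

end Yorke

/-!
Since `ω` has `X̂` as its only neighbourhood, a subbasic condition `φ(K) ⊆ U` is void when
`ω ∈ U` and otherwise says `K ⊆ dom φ` and `φ(K) ⊆ u` for an open `u ⊆ X`. Hence `X̂` inherits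
a countable basis from `X`, and `C(G, X̂)` is second countable because `G` is locally compact and
second countable. For the convergence criterion, uniform convergence on `K` pushes `φₙ(K)` into
every open `u` containing the compact set `φ(K)`, through a thickening of `φ(K)` inside `u`.
Conversely, covering `φ(K)` by finitely many `ε/4`-balls cuts `K` into finitely many compact
pieces, each sent by `φ` into an `ε/2`-ball; compact-open convergence on each piece then makes
`φₙ` uniformly `ε`-close to `φ` on `K`.
-/

namespace Yorke

theorem subset_range_some_of_none_notMem {X : Type*} {s : Set (Option X)} (hnone : none ∉ s) :
    s ⊆ range some := by
  rw [(isCompl_range_some_none X).eq_compl]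
  rintro _ ho rfl
  exact hnone ho

section OptionTopology

variable {X : Type*} [TopologicalSpace X]

theorem nhds_none : 𝓝 (none : Option X) = ⊤ := by
  refine top_unique ?_
  rw [hatTopology, nhds_generateFrom]
  refine le_iInf₂ fun s ⟨hnone, hs⟩ => ?_
  rcases hs with rfl | ⟨u, -, rfl⟩
  · simp
  · simp at hnone

theorem eq_univ_of_isOpen_of_none_mem {s : Set (Option X)} (hs : IsOpen s) (hnone : none ∈ s) :
    s = univ := by
  simpa [nhds_none] using hs.mem_nhds hnone

theorem isOpen_image_some {u : Set X} (hu : IsOpen u) : IsOpen (some '' u) :=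
  isOpen_generateFrom_of_mem (Or.inr ⟨u, hu, rfl⟩)

theorem continuous_some : Continuous (some : X → Option X) := by
  refine continuous_generateFrom_iff.2 ?_
  rintro s (rfl | ⟨u, hu, rfl⟩)
  · exact isOpen_univ
  · rwa [preimage_image_eq _ (Option.some_injective X)]

theorem isOpenEmbedding_some : IsOpenEmbedding (some : X → Option X) :=
  .of_continuous_injective_isOpenMap continuous_some (Option.some_injective X)
    fun _ => isOpen_image_some

theorem isOpen_compl_singleton_none : IsOpen ({none}ᶜ : Set (Option X)) := by
  rw [← (isCompl_range_some_none X).eq_compl]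
  exact isOpenEmbedding_some.isOpen_range

theorem isCompact_preimage_some {s : Set (Option X)} (hs : IsCompact s) (hnone : none ∉ s) :
    IsCompact (some ⁻¹' s) :=
  isOpenEmbedding_some.isInducing.isCompact_preimage' hs (subset_range_some_of_none_notMem hnone)

theorem isTopologicalBasis_insert_univ_image_some {B : Set (Set X)} (hB : IsTopologicalBasis B) :
    IsTopologicalBasis (insert univ ((some '' ·) '' B)) := by
  refine isTopologicalBasis_of_isOpen_of_nhds ?_ ?_
  · rintro s (rfl | ⟨b, hb, rfl⟩)
    exacts [isOpen_univ, isOpen_image_some (hB.isOpen hb)]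
  · rintro (_ | x) s hx hs
    · exact ⟨univ, mem_insert _ _, mem_univ _, (eq_univ_of_isOpen_of_none_mem hs hx).ge⟩
    · obtain ⟨b, hb, hxb, hbs⟩ :=
        hB.exists_subset_of_mem_open hx (hs.preimage continuous_some)
      exact ⟨some '' b, mem_insert_of_mem _ (mem_image_of_mem _ hb), mem_image_of_mem _ hxb,
        image_subset_iff.2 hbs⟩

instance [SecondCountableTopology X] : SecondCountableTopology (Option X) :=
  (isTopologicalBasis_insert_univ_image_some (isBasis_countableBasis X)).secondCountableTopology
    (((countable_countableBasis X).image _).insert _)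

end OptionTopology

section CompactConvergence

open Metric

variable {α X ι : Type*} [TopologicalSpace α] [PseudoMetricSpace X] {l : Filter ι}
  {F : ι → α → Option X} {f : α → Option X} {K : Set α}

def TendstoUniformlyOnDom (F : ι → α → Option X) (f : α → Option X) (l : Filter ι)
    (K : Set α) : Prop :=
  ∀ ε : ℝ, 0 < ε → ∀ᶠ i in l, ∀ t ∈ K, ∀ x y : X, f t = some x → F i t = some y → dist y x < ε

theorem eventually_mapsTo_image_some (hf : Continuous f) (hK : IsCompact K)
    (hdom : ∀ᶠ i in l, K ⊆ {t | F i t ≠ none}) (hunif : TendstoUniformlyOnDom F f l K)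
    {u : Set X} (hu : IsOpen u) (hfu : MapsTo f K (some '' u)) :
    ∀ᶠ i in l, MapsTo (F i) K (some '' u) := by
  have hY : IsCompact (some ⁻¹' (f '' K)) :=
    isCompact_preimage_some (hK.image hf) fun ⟨t, ht, hnone⟩ => by
      obtain ⟨x, -, hx⟩ := hfu ht
      exact Option.some_ne_none x (hx.trans hnone)
  have hYu : some ⁻¹' (f '' K) ⊆ u :=
    (preimage_mono hfu.image_subset).trans (preimage_image_eq u (Option.some_injective X)).subset
  obtain ⟨δ, hδ, hδu⟩ := hY.exists_thickening_subset_open hu hYu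
  filter_upwards [hdom, hunif δ hδ] with i hdomi hδi t ht
  obtain ⟨x, -, hx⟩ := hfu ht
  obtain ⟨y, hy⟩ := Option.ne_none_iff_exists.1 (hdomi ht)
  exact ⟨y, hδu (mem_thickening_iff.2 ⟨x, ⟨t, ht, hx.symm⟩, hδi t ht x y hx.symm hy.symm⟩),
    hy⟩

theorem tendstoUniformlyOnDom_of_forall_eventually_mapsTo (hf : Continuous f) (hK : IsCompact K)
    (hKf : K ⊆ {t | f t ≠ none})
    (h : ∀ L, IsCompact L → ∀ U, IsOpen U → MapsTo f L U → ∀ᶠ i in l, MapsTo (F i) L U) :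
    TendstoUniformlyOnDom F f l K := by
  intro ε hε
  obtain ⟨c, -, hc, hcover⟩ := finite_cover_balls_of_compact
    (isCompact_preimage_some (hK.image hf) fun ⟨t, ht, hnone⟩ => hKf ht hnone)
    (by positivity : 0 < ε / 4)
  let L z := K \ f ⁻¹' (some '' (closedBall z (ε / 4))ᶜ)
  have hfL z : MapsTo f (L z) (some '' ball z (ε / 2)) := by
    rintro t ⟨htK, htz⟩
    obtain ⟨x, hx⟩ := Option.ne_none_iff_exists.1 (hKf htK)
    refine ⟨x, closedBall_subset_ball (by linarith : ε / 4 < ε / 2) ?_, hx⟩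
    by_contra hxz
    exact htz ⟨x, hxz, hx⟩
  have hev : ∀ᶠ i in l, ∀ z ∈ c, MapsTo (F i) (L z) (some '' ball z (ε / 2)) :=
    hc.eventually_all.2 fun z _ => h _
      (hK.diff ((isOpen_image_some isClosed_closedBall.isOpen_compl).preimage hf)) _
      (isOpen_image_some isOpen_ball) (hfL z)
  filter_upwards [hev] with i hi t ht x y hx hy
  obtain ⟨z, hz, hxz⟩ : ∃ z ∈ c, x ∈ ball z (ε / 4) := by
    simpa using hcover (show x ∈ some ⁻¹' (f '' K) from ⟨t, ht, hx⟩)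
  have htL : t ∈ L z := ⟨ht, fun ⟨x', hx', hx'x⟩ =>
    hx' (ball_subset_closedBall (Option.some_injective X (hx'x.trans hx) ▸ hxz))⟩
  obtain ⟨y', hyz, hy'⟩ := hi z hz htL
  rw [hy, Option.some_inj] at hy'
  calc dist y x ≤ dist y z + dist x z := dist_triangle_right y x z
    _ < ε / 2 + ε / 4 := add_lt_add (hy' ▸ hyz) hxz
    _ < ε := by linarith

theorem tendsto_nhds_iff_tendstoUniformlyOnDom {F : ι → C(α, Option X)} {f : C(α, Option X)} :
    Tendsto F l (𝓝 f) ↔ ∀ K, IsCompact K → K ⊆ {t | f t ≠ none} →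
      (∀ᶠ i in l, K ⊆ {t | F i t ≠ none}) ∧ TendstoUniformlyOnDom (fun i => F i) f l K := by
  rw [ContinuousMap.tendsto_nhds_compactOpen]
  refine ⟨fun h K hK hKf => ⟨h K hK _ isOpen_compl_singleton_none hKf,
    tendstoUniformlyOnDom_of_forall_eventually_mapsTo f.continuous hK hKf h⟩, ?_⟩
  intro h K hK U hU hfU
  by_cases hnone : none ∈ U
  · rw [eq_univ_of_isOpen_of_none_mem hU hnone]
    exact .of_forall fun i => mapsTo_univ _ _
  obtain ⟨hdom, hunif⟩ := h K hK fun t ht hft => hnone (hft ▸ hfU ht)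
  rw [← image_preimage_eq_of_subset (subset_range_some_of_none_notMem hnone)] at hfU ⊢
  exact eventually_mapsTo_image_some f.continuous hK hdom hunif (hU.preimage continuous_some) hfU

end CompactConvergence

end Yorke

namespace Yorke

variable {G X : Type*} [Group G] [TopologicalSpace G] [IsTopologicalGroup G]
  [LocallyCompactSpace G] [SecondCountableTopology G] [T2Space G]
  [MetricSpace X] [SecondCountableTopology X]

/-- `C_p(G,X)` is second countable, and `φ_n → φ` in `C_p(G,X)` iff for every compact
`K ⊆ dom φ` one has `K ⊆ dom φ_n` for large `n` and `sup_{t ∈ K} d(φ_n(t), φ(t)) → 0`. -/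
theorem statement_0 :
    SecondCountableTopology (Cp G X) ∧
    ∀ (φ : ℕ → Cp G X) (ψ : Cp G X),
      Tendsto φ atTop (𝓝 ψ) ↔
        ∀ K : Set G, IsCompact K → K ⊆ dom ψ →
          (∀ᶠ n in atTop, K ⊆ dom (φ n)) ∧
          ∀ ε : ℝ, 0 < ε → ∀ᶠ n in atTop, ∀ t ∈ K, ∀ x y : X,
            ψ.1 t = some x → (φ n).1 t = some y → dist y x < ε := by
  refine ⟨IsEmbedding.subtypeVal.secondCountableTopology, fun φ ψ => ?_⟩
  rw [IsEmbedding.subtypeVal.tendsto_nhds_iff]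
  exact tendsto_nhds_iff_tendstoUniformlyOnDom

end Yorke
end

section
/- For every partial map φ ∈ C_p(G,X) with nonempty connected domain there exists a maximally defined partial map φ̄ ∈ C_p(G,X) such that dom φ ⊆ dom φ̄ and φ = φ̄ on dom φ. -/
open Set Filter Topology TopologicalSpace

/-!
Order partial maps by extension. By Zorn's lemma it suffices that every nonempty chain of
extensions of `φ` with connected domains has an upper bound of the same kind: glue the chain
into one map. Continuity of the glued map is local, since the only open set of `X̂` containing
`ω` is `X̂` itself, and its domain is a nested union of connected sets, hence connected.
-/

namespace Yorke

section ExtensionOrder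

variable {G X : Type*} [TopologicalSpace G] [TopologicalSpace X]

lemma continuous_option_iff {f : G → Option X} :
    Continuous f ↔ ∀ u : Set X, IsOpen u → IsOpen (f ⁻¹' (some '' u)) := by
  rw [continuous_generateFrom_iff]
  constructor
  · exact fun h u hu => h _ (Or.inr ⟨u, hu, rfl⟩)
  · rintro h s (rfl | ⟨u, hu, rfl⟩)
    · exact isOpen_univ
    · exact h u hu

lemma apply_eq_none_of_not_mem_dom {ψ : Cp G X} {g : G} (hg : g ∉ dom ψ) : ψ.1 g = none :=
  not_not.1 hg

instance : PartialOrder (Cp G X) where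
  le ψ χ := dom ψ ⊆ dom χ ∧ ∀ g ∈ dom ψ, ψ.1 g = χ.1 g
  le_refl _ := ⟨subset_rfl, fun _ _ => rfl⟩
  le_trans _ _ _ h h' := ⟨h.1.trans h'.1, fun g hg => (h.2 g hg).trans (h'.2 g (h.1 hg))⟩
  le_antisymm ψ χ h h' := by
    refine Subtype.ext (ContinuousMap.ext fun g => ?_)
    by_cases hg : g ∈ dom ψ
    · exact h.2 g hg
    · rw [apply_eq_none_of_not_mem_dom hg,
        apply_eq_none_of_not_mem_dom fun hχ => hg (h'.1 hχ)]

lemma maximallyDefined_iff {ψ : Cp G X} :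
    MaximallyDefined ψ ↔ Maximal (fun χ : Cp G X => IsConnected (dom χ)) ψ :=
  ⟨fun h => ⟨h.1, fun χ hχ hle => (h.2 χ hχ hle.1 hle.2).ge⟩,
    fun h => ⟨h.1, fun _ hχ hsub hagree => h.eq_of_le hχ ⟨hsub, hagree⟩⟩⟩

end ExtensionOrder

section ChainSup

variable {G X : Type*} [TopologicalSpace G] [TopologicalSpace X] {c : Set (Cp G X)}

open Classical in
noncomputable def glue (c : Set (Cp G X)) (g : G) : Option X :=
  if h : ∃ ψ ∈ c, g ∈ dom ψ then h.choose.1 g else none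

lemma glue_eq_of_mem_dom (hc : IsChain (· ≤ ·) c) {ψ : Cp G X} (hψ : ψ ∈ c) {g : G}
    (hg : g ∈ dom ψ) : glue c g = ψ.1 g := by
  have hex : ∃ χ ∈ c, g ∈ dom χ := ⟨ψ, hψ, hg⟩
  rw [glue, dif_pos hex]
  rcases hc.total hex.choose_spec.1 hψ with h | h
  · exact h.2 g hex.choose_spec.2
  · exact (h.2 g hg).symm

lemma glue_eq_none {g : G} (hg : g ∉ ⋃ ψ ∈ c, dom ψ) : glue c g = none := by
  rw [glue, dif_neg]
  simpa only [mem_iUnion₂, exists_prop] using hg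

lemma glue_ne_none_iff (hc : IsChain (· ≤ ·) c) {g : G} :
    glue c g ≠ none ↔ g ∈ ⋃ ψ ∈ c, dom ψ := by
  refine ⟨fun h => not_not.1 fun hg => h (glue_eq_none hg), fun hg => ?_⟩
  obtain ⟨ψ, hψ, hgψ⟩ := mem_iUnion₂.1 hg
  rwa [glue_eq_of_mem_dom hc hψ hgψ]

lemma glue_preimage_some (hc : IsChain (· ≤ ·) c) (u : Set X) :
    glue c ⁻¹' (some '' u) = ⋃ ψ ∈ c, ψ.1 ⁻¹' (some '' u) := by
  ext g
  simp only [mem_preimage, mem_iUnion, exists_prop]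
  constructor
  · rintro hgu
    have hg : g ∈ ⋃ ψ ∈ c, dom ψ := (glue_ne_none_iff hc).1 fun h => by simp [h] at hgu
    obtain ⟨ψ, hψ, hgψ⟩ := mem_iUnion₂.1 hg
    exact ⟨ψ, hψ, glue_eq_of_mem_dom hc hψ hgψ ▸ hgu⟩
  · rintro ⟨ψ, hψ, hgu⟩
    have hgψ : g ∈ dom ψ := by
      obtain ⟨x, -, hx⟩ := hgu
      simp [dom, ← hx]
    rwa [glue_eq_of_mem_dom hc hψ hgψ]

lemma continuous_glue (hc : IsChain (· ≤ ·) c) : Continuous (glue c) :=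
  continuous_option_iff.2 fun u hu => by
    rw [glue_preimage_some hc]
    exact isOpen_biUnion fun ψ _ => continuous_option_iff.1 ψ.1.continuous u hu

noncomputable def chainSup (hc : IsChain (· ≤ ·) c) (hne : c.Nonempty) : Cp G X :=
  ⟨⟨glue c, continuous_glue hc⟩, by
    obtain ⟨ψ, hψ⟩ := hne
    obtain ⟨g, hg⟩ := ψ.2
    exact ⟨g, (glue_ne_none_iff hc).2 (mem_biUnion hψ hg)⟩⟩

lemma dom_chainSup (hc : IsChain (· ≤ ·) c) (hne : c.Nonempty) :
    dom (chainSup hc hne) = ⋃ ψ ∈ c, dom ψ :=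
  ext fun _ => glue_ne_none_iff hc

lemma le_chainSup (hc : IsChain (· ≤ ·) c) (hne : c.Nonempty) {ψ : Cp G X} (hψ : ψ ∈ c) :
    ψ ≤ chainSup hc hne :=
  ⟨fun _ hg => dom_chainSup hc hne ▸ mem_biUnion hψ hg,
    fun _ hg => (glue_eq_of_mem_dom hc hψ hg).symm⟩

lemma isConnected_dom_chainSup (hc : IsChain (· ≤ ·) c) (hne : c.Nonempty)
    (hconn : ∀ ψ ∈ c, IsConnected (dom ψ)) : IsConnected (dom (chainSup hc hne)) := by
  refine ⟨(chainSup hc hne).2, ?_⟩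
  rw [dom_chainSup, ← sUnion_image]
  refine IsPreconnected.sUnion_directed ?_ (forall_mem_image.2 fun ψ hψ => (hconn ψ hψ).2)
  rintro _ ⟨ψ, hψ, rfl⟩ _ ⟨χ, hχ, rfl⟩
  rcases hc.total hψ hχ with h | h
  · exact ⟨dom χ, mem_image_of_mem _ hχ, h.1, subset_rfl⟩
  · exact ⟨dom ψ, mem_image_of_mem _ hψ, subset_rfl, h.1⟩

end ChainSup

variable {G X : Type*} [Group G] [TopologicalSpace G] [IsTopologicalGroup G]
  [LocallyCompactSpace G] [SecondCountableTopology G] [T2Space G]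
  [MetricSpace X] [SecondCountableTopology X]

/-- Every partial map with nonempty connected domain extends to a maximally defined one. -/
theorem statement_1 (φ : Cp G X) (hφ : IsConnected (dom φ)) :
    ∃ ψ : Cp G X, MaximallyDefined ψ ∧ dom φ ⊆ dom ψ ∧ ∀ g ∈ dom φ, φ.1 g = ψ.1 g := by
  set s := {ψ : Cp G X | IsConnected (dom ψ) ∧ φ ≤ ψ}
  have chain_bdd : ∀ c ⊆ s, IsChain (· ≤ ·) c → ∀ ψ ∈ c, ∃ ub ∈ s, ∀ χ ∈ c, χ ≤ ub :=
    fun c hcs hc ψ hψ => ⟨chainSup hc ⟨ψ, hψ⟩,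
      ⟨isConnected_dom_chainSup hc ⟨ψ, hψ⟩ fun χ hχ => (hcs hχ).1,
        (hcs hψ).2.trans (le_chainSup hc ⟨ψ, hψ⟩ hψ)⟩,
      fun _ hχ => le_chainSup hc ⟨ψ, hψ⟩ hχ⟩
  obtain ⟨m, hφm, hm⟩ := zorn_le_nonempty₀ s chain_bdd φ ⟨hφ, le_rfl⟩
  refine ⟨m, maximallyDefined_iff.2 ⟨hm.prop.1, fun ψ hψ hmψ => ?_⟩, hφm.1, hφm.2⟩
  exact hm.2 ⟨hψ, hφm.trans hmψ⟩ hmψ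

end Yorke
end

section
/- Let {φ_n} be a sequence of globally defined continuous maps φ_n ∈ C(G,X) that converges to φ in C(G,X) with the compact-open topology. If φ_n also converges to some ψ in C_s(G,X), then ψ = φ (in particular dom ψ = G). Consequently, if {φ_{n_i}} is any subsequence of {φ_n} convergent in C_s(G,X), then φ_{n_i} → φ in C_s(G,X). -/
/-!
Evaluation at a point of `G` is continuous on `C_p(G,X)`, and although `X̂` is not Hausdorff,
distinct points of `X` still have disjoint neighbourhoods in `X̂`. Hence two limits of the same
sequence agree wherever both are defined. A limit `ψ` defined on all of `G` therefore extends
any other limit `χ`, and maximality of `χ` forces `χ = ψ`.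
-/

open Set Filter Topology TopologicalSpace

namespace Yorke

lemma isOpen_some_image {X : Type*} [TopologicalSpace X] {u : Set X} (hu : IsOpen u) :
    IsOpen ((Option.some : X → Option X) '' u) :=
  isOpen_generateFrom_of_mem (Or.inr ⟨u, hu, rfl⟩)

lemma disjoint_nhds_some {X : Type*} [TopologicalSpace X] [T2Space X] {x y : X}
    (hxy : x ≠ y) : Disjoint (𝓝 (some x)) (𝓝 (some y)) := by
  obtain ⟨u, v, hu, hv, hxu, hyv, huv⟩ := t2_separation hxy
  exact disjoint_of_disjoint_of_mem
    ((Set.disjoint_image_iff (Option.some_injective X)).mpr huv)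
    ((isOpen_some_image hu).mem_nhds ⟨x, hxu, rfl⟩)
    ((isOpen_some_image hv).mem_nhds ⟨y, hyv, rfl⟩)

lemma apply_eq_of_tendsto {G X α : Type*} [TopologicalSpace G] [TopologicalSpace X] [T2Space X]
    {l : Filter α} [l.NeBot] {f : α → Cp G X} {ψ χ : Cp G X}
    (hψ : Tendsto f l (𝓝 ψ)) (hχ : Tendsto f l (𝓝 χ)) {g : G}
    (hgψ : g ∈ dom ψ) (hgχ : g ∈ dom χ) : ψ.1 g = χ.1 g := by
  have tendsto_eval {φ : Cp G X} (h : Tendsto f l (𝓝 φ)) :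
      Tendsto (fun a => (f a).1 g) l (𝓝 (φ.1 g)) :=
    (((continuous_eval_const g).comp continuous_subtype_val).tendsto φ).comp h
  obtain ⟨x, hx⟩ := Option.ne_none_iff_exists'.mp hgψ
  obtain ⟨y, hy⟩ := Option.ne_none_iff_exists'.mp hgχ
  rw [hx, hy, Option.some_inj]
  by_contra hxy
  exact (tendsto_eval hψ).not_tendsto (hx ▸ hy ▸ disjoint_nhds_some hxy) (tendsto_eval hχ)

lemma eq_of_tendsto_of_dom_eq_univ {G X α : Type*} [TopologicalSpace G] [TopologicalSpace X]
    [T2Space X] {l : Filter α} [l.NeBot] {f : α → Cs G X} {ψ χ : Cs G X}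
    (hψdom : dom ψ.1 = Set.univ) (hψ : Tendsto f l (𝓝 ψ)) (hχ : Tendsto f l (𝓝 χ)) :
    χ = ψ := by
  have hval {φ : Cs G X} (h : Tendsto f l (𝓝 φ)) : Tendsto (fun a => (f a).1) l (𝓝 φ.1) :=
    (continuous_subtype_val.tendsto φ).comp h
  refine Subtype.ext (χ.2.2 ψ.1 ψ.2.1 (hψdom ▸ Set.subset_univ _) fun g hg => ?_)
  exact apply_eq_of_tendsto (hval hχ) (hval hψ) hg (hψdom ▸ Set.mem_univ g)

end Yorke

namespace Yorke

variable {G X : Type*} [Group G] [TopologicalSpace G] [IsTopologicalGroup G]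
  [LocallyCompactSpace G] [SecondCountableTopology G] [T2Space G]
  [MetricSpace X] [SecondCountableTopology X]

theorem statement_2_general (φ : ℕ → Cs G X)
    (ψ : Cs G X) (hψdom : dom ψ.1 = Set.univ)
    (hconv : Tendsto φ atTop (𝓝 ψ)) :
    (∀ χ : Cs G X, Tendsto φ atTop (𝓝 χ) → χ = ψ) ∧
    ∀ m : ℕ → ℕ, StrictMono m → (∃ χ : Cs G X, Tendsto (φ ∘ m) atTop (𝓝 χ)) →
      Tendsto (φ ∘ m) atTop (𝓝 ψ) := by
  refine ⟨fun χ hχ => eq_of_tendsto_of_dom_eq_univ hψdom hconv hχ, fun m hm ⟨χ, hχ⟩ => ?_⟩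
  have hψ : Tendsto (φ ∘ m) atTop (𝓝 ψ) := hconv.comp hm.tendsto_atTop
  rwa [eq_of_tendsto_of_dom_eq_univ hψdom hψ hχ] at hχ

/-- If a sequence of globally defined maps converges to a globally defined map `ψ` in
`C(G,X)`, then any limit of the sequence in `C_s(G,X)` equals `ψ`; consequently any
convergent subsequence converges to `ψ`. -/
theorem statement_2 (φ : ℕ → Cs G X) (hdom : ∀ n : ℕ, dom (φ n).1 = Set.univ)
    (ψ : Cs G X) (hψdom : dom ψ.1 = Set.univ)
    (hconv : Tendsto φ atTop (𝓝 ψ)) :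
    (∀ χ : Cs G X, Tendsto φ atTop (𝓝 χ) → χ = ψ) ∧
    ∀ m : ℕ → ℕ, StrictMono m → (∃ χ : Cs G X, Tendsto (φ ∘ m) atTop (𝓝 χ)) →
      Tendsto (φ ∘ m) atTop (𝓝 ψ) :=
  statement_2_general φ ψ hψdom hconv

end Yorke
end

section
/- Let S ⊆ C_s(G,X) satisfy the compactness axiom and let φ ∈ S. If there is a compact set K ⊆ X with O(φ) ⊆ K, then dom φ coincides with a connected component of G. -/
open Set Filter Topology TopologicalSpace

/-!
The domain of `φ` is open, nonempty and connected, so it suffices to show that it is closed.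
Let `g` be in its closure and `N` a compact neighbourhood of `g`. The pairs `(u, φ)` with `u ∈ dom φ`
near `g` lie in the compact set `S*(N × K)`, so they cluster at some `(g, ψ)` in it. Then `ψ` lies
in the closure of `{φ}`, and since being defined at `g` is an open condition on partial maps and
`ψ` is defined at `g`, so is `φ`.
-/

namespace Yorke

theorem _root_.IsConnected.eq_connectedComponent_of_isClopen {α : Type*} [TopologicalSpace α]
    {s : Set α} (hs : IsConnected s) (hc : IsClopen s) {x : α} (hx : x ∈ s) :
    s = connectedComponent x :=
  subset_antisymm (hs.isPreconnected.subset_connectedComponent hx) (hc.connectedComponent_subset hx)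

theorem _root_.IsCompact.exists_specializes_mem_of_eventually_mem {A B : Type*}
    [TopologicalSpace A] [T2Space A] [TopologicalSpace B] {C : Set (A × B)} (hC : IsCompact C) {s : Set A} {a : A}
    (ha : a ∈ closure s) {b : B} (hs : ∀ᶠ u in 𝓝[s] a, (u, b) ∈ C) :
    ∃ b', b ⤳ b' ∧ (a, b') ∈ C := by
  have := mem_closure_iff_nhdsWithin_neBot.mp ha
  obtain ⟨⟨a', b'⟩, hmem, hcl⟩ := hC (f := map (·, b) (𝓝[s] a)) (le_principal_iff.mpr hs)
  have ha' : ClusterPt a' (𝓝[s] a) := by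
    simpa only [map_map, Function.comp_def, map_id'] using
      hcl.map continuous_fst.continuousAt tendsto_map
  have hb' : ClusterPt b' (pure b) := by
    simpa only [map_map, Function.comp_def, Filter.map_const] using
      hcl.map continuous_snd.continuousAt tendsto_map
  obtain rfl : a' = a := eq_of_nhds_neBot (ha'.mono nhdsWithin_le_nhds).neBot
  exact ⟨b', specializes_iff_clusterPt.mpr hb', hmem⟩

section PartialMaps

variable {G X : Type*} [TopologicalSpace G] [TopologicalSpace X]

theorem isOpen_ne_none : IsOpen {o : Option X | o ≠ none} := by
  have h : {o : Option X | o ≠ none} = Option.some '' univ := by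
    ext o; cases o <;> simp
  rw [h]
  exact isOpen_generateFrom_of_mem (Or.inr ⟨univ, isOpen_univ, rfl⟩)

theorem isOpen_dom (φ : Cp G X) : IsOpen (dom φ) :=
  isOpen_ne_none.preimage φ.1.continuous

theorem isOpen_setOf_mem_dom (g : G) : IsOpen {φ : Cp G X | g ∈ dom φ} :=
  isOpen_ne_none.preimage ((continuous_eval_const g).comp continuous_subtype_val)

theorem mk_mem_star_prod {S : Set (Cs G X)} {φ : Cs G X} (hφ : φ ∈ S) {N : Set G} {K : Set X}
    (horb : orbit φ ⊆ K) {g : G} (hg : g ∈ dom φ.1) (hN : g ∈ N) :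
    (g, φ) ∈ star S (N ×ˢ K) := by
  obtain ⟨x, hx⟩ := Option.ne_none_iff_exists'.mp hg
  exact ⟨hφ, x, hx, mk_mem_prod hN (horb ⟨g, hx⟩)⟩

theorem isClosed_dom_of_orbit_subset_isCompact [LocallyCompactSpace G] [T2Space G]
    {S : Set (Cs G X)} (hS : CompactnessAxiom S) {φ : Cs G X} (hφ : φ ∈ S) {K : Set X}
    (hK : IsCompact K) (horb : orbit φ ⊆ K) : IsClosed (dom φ.1) := by
  refine closure_subset_iff_isClosed.mp fun g hg => ?_
  obtain ⟨N, hN, hNg⟩ := exists_compact_mem_nhds g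
  have hnear : ∀ᶠ u in 𝓝[dom φ.1] g, (u, φ) ∈ star S (N ×ˢ K) := by
    filter_upwards [self_mem_nhdsWithin, nhdsWithin_le_nhds hNg] with u hu huN
    exact mk_mem_star_prod hφ horb hu huN
  obtain ⟨ψ, hφψ, -, x, hx, -⟩ :=
    (hS _ (hN.prod hK)).exists_specializes_mem_of_eventually_mem hg hnear
  exact hφψ.mem_open ((isOpen_setOf_mem_dom g).preimage continuous_subtype_val)
    (Option.ne_none_iff_exists'.mpr ⟨x, hx⟩)

end PartialMaps

variable {G X : Type*} [Group G] [TopologicalSpace G] [IsTopologicalGroup G]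
  [LocallyCompactSpace G] [SecondCountableTopology G] [T2Space G]
  [MetricSpace X] [SecondCountableTopology X]

/-- If `S` satisfies the compactness axiom and the orbit of `φ ∈ S` is contained in a
compact set, then `dom φ` is a connected component of `G`. -/
theorem statement_6 (S : Set (Cs G X)) (hS : CompactnessAxiom S)
    (φ : Cs G X) (hφ : φ ∈ S) (K : Set X) (hK : IsCompact K) (horb : orbit φ ⊆ K) :
    ∃ g : G, dom φ.1 = connectedComponent g := by
  obtain ⟨g, hg⟩ := φ.2.1.nonempty
  exact ⟨g, φ.2.1.eq_connectedComponent_of_isClopen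
    ⟨isClosed_dom_of_orbit_subset_isCompact hS hφ hK horb, isOpen_dom φ.1⟩ hg⟩

end Yorke
end

section
/- The shift map σ: G × C_p(G,X) → C_p(G,X), defined by σ(g,φ)(x) := φ(xg) for x ∈ (dom φ)g⁻¹, is continuous and satisfies σ(e,φ) = φ for every φ ∈ C_p(G,X) and σ(g,σ(h,φ)) = σ(gh,φ) for all g,h ∈ G and φ ∈ C_p(G,X); that is, σ is a continuous left G-action on C_p(G,X). -/
open Set Filter Topology TopologicalSpace

namespace Yorke

theorem continuous_mulRight_continuousMap {M : Type*} [TopologicalSpace M] [Mul M]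
    [ContinuousMul M] : Continuous (ContinuousMap.mulRight : M → C(M, M)) :=
  ContinuousMap.continuous_of_continuous_uncurry _ (continuous_snd.mul continuous_fst)

section Shift

variable {G X : Type*} [TopologicalSpace X] [Group G] [TopologicalSpace G] [IsTopologicalGroup G]

@[simp]
theorem shift_apply (g : G) (φ : Cp G X) (x : G) : (shift g φ).1 x = φ.1 (x * g) :=
  rfl

theorem shift_one (φ : Cp G X) : shift (1 : G) φ = φ :=
  Subtype.ext <| ContinuousMap.ext fun x => by rw [shift_apply, mul_one]

theorem shift_shift (g h : G) (φ : Cp G X) : shift g (shift h φ) = shift (g * h) φ :=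
  Subtype.ext <| ContinuousMap.ext fun x => by simp only [shift_apply, mul_assoc]

-- Joint continuity of composition `C(G,G) × C(G,X̂) → C(G,X̂)` is where local compactness enters.
theorem continuous_shift [LocallyCompactSpace G] :
    Continuous (fun p : G × Cp G X => shift p.1 p.2) :=
  (continuous_subtype_val.comp continuous_snd).compCM
    (continuous_mulRight_continuousMap.comp continuous_fst) |>.subtype_mk _

end Shift

variable {G X : Type*} [Group G] [TopologicalSpace G] [IsTopologicalGroup G]
  [LocallyCompactSpace G] [SecondCountableTopology G] [T2Space G]
  [MetricSpace X] [SecondCountableTopology X]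

/-- The shift map `σ` is a continuous left `G`-action on `C_p(G,X)`. -/
theorem statement_8 :
    Continuous (fun p : G × Cp G X => shift p.1 p.2) ∧
    (∀ φ : Cp G X, shift (1 : G) φ = φ) ∧
    ∀ (g h : G) (φ : Cp G X), shift g (shift h φ) = shift (g * h) φ :=
  ⟨continuous_shift, shift_one, shift_shift⟩

end Yorke
end

section
/- Let X be locally compact. If a σ-invariant subset S ⊆ C_s(G,X) satisfies the compactness, existence, and uniqueness axioms on G × X and has domain G, then S*(G × X) is isomorphic to S₀*(G × X), where S₀ := {ψ_x ∈ C_s(G,X) : ψ_x(g) = x for all g ∈ G, x ∈ X} is the set of constant maps. -/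
open Set Filter Topology TopologicalSpace

/-!
By existence and uniqueness, `ev : S*(G×X) → G×X`, `(g, φ) ↦ (g, φ g)`, is a continuous
bijection, and the compactness axiom makes it proper, hence a homeomorphism. Its inverse
gives the unique motion of `S` through `(e, x)`, depending continuously on `x`, so evaluation
at `e` is a homeomorphism `S ≃ₜ X`; as all motions are defined on `G`, also
`S*(G×X) ≃ₜ G × S`. The constant maps `S₀` satisfy the same axioms once `G` is connected, which
holds because the domain `G` of a maximally defined map is connected. Composing gives
`η : S ≃ₜ X ≃ₜ S₀`, `H = id × η` and `k = ev ∘ H ∘ ev⁻¹`.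
-/

namespace Yorke

section HatTopology

variable {X : Type*} [TopologicalSpace X]

theorem isInducing_some : IsInducing (Option.some : X → Option X) := by
  refine ⟨?_⟩
  rw [hatTopology, induced_generateFrom_eq]
  have : preimage Option.some '' ({univ} ∪
      {s : Set (Option X) | ∃ u : Set X, IsOpen u ∧ s = Option.some '' u}) = {u | IsOpen u} := by
    ext u
    constructor
    · rintro ⟨s, rfl | ⟨v, hv, rfl⟩, rfl⟩
      · exact isOpen_univ
      · rwa [preimage_image_eq _ (Option.some_injective X)]
    · exact fun hu => ⟨_, Or.inr ⟨u, hu, rfl⟩, preimage_image_eq _ (Option.some_injective X)⟩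
  rw [this, generateFrom_setOfPred_isOpen]

theorem continuous_option_get {A : Type*} [TopologicalSpace A] {f : A → Option X}
    (hf : Continuous f) (h : ∀ a, (f a).isSome) : Continuous fun a => (f a).get (h a) :=
  isInducing_some.continuous_iff.2 <| by simpa only [Function.comp_def, Option.some_get] using hf

end HatTopology

section Evaluation

variable {G X : Type*} [TopologicalSpace G] [TopologicalSpace X]

theorem Cs.ext {φ ψ : Cs G X} (h : ∀ g, φ.1.1 g = ψ.1.1 g) : φ = ψ :=
  Subtype.ext <| Subtype.ext <| ContinuousMap.ext h

instance [IsEmpty X] : IsEmpty (Cs G X) :=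
  ⟨fun φ => by
    obtain ⟨g, hg⟩ := φ.1.2
    obtain ⟨x, -⟩ := Option.ne_none_iff_exists'.1 hg
    exact isEmptyElim x⟩

theorem isSome_of_mem_star {S : Set (Cs G X)} {W : Set (G × X)} {q : G × Cs G X}
    (hq : q ∈ star S W) : (q.2.1.1 q.1).isSome := by
  obtain ⟨-, x, hx, -⟩ := hq
  simp [hx]

theorem isSome_of_dom_eq_univ {φ : Cp G X} (h : dom φ = univ) (g : G) : (φ.1 g).isSome :=
  Option.isSome_iff_ne_none.2 (show g ∈ dom φ from h ▸ mem_univ g)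

theorem mem_star_univ {S : Set (Cs G X)} {φ : Cs G X} (hφ : φ ∈ S) {g : G} (hg : g ∈ dom φ.1) :
    (g, φ) ∈ star S univ :=
  ⟨hφ, _, (Option.some_get (Option.ne_none_iff_isSome.1 hg)).symm, trivial⟩

/-- The paper's `ev : S*W → G × X`, `(g, φ) ↦ (g, φ g)`. -/
def starEval (S : Set (Cs G X)) (W : Set (G × X)) (q : star S W) : G × X :=
  (q.1.1, (q.1.2.1.1 q.1.1).get (isSome_of_mem_star q.2))

variable {S : Set (Cs G X)} {W : Set (G × X)}

theorem star_mono {W' : Set (G × X)} (h : W ⊆ W') : star S W ⊆ star S W' :=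
  fun _ ⟨hS, x, hx, hW⟩ => ⟨hS, x, hx, h hW⟩

theorem starEval_eq_iff {q : star S W} {p : G × X} :
    starEval S W q = p ↔ q.1.1 = p.1 ∧ q.1.2.1.1 q.1.1 = some p.2 := by
  simp [starEval, Prod.ext_iff, Option.eq_some_iff_get_eq, isSome_of_mem_star q.2]

theorem starEval_eq {q : star S W} {x : X} (hx : q.1.2.1.1 q.1.1 = some x) :
    starEval S W q = (q.1.1, x) :=
  starEval_eq_iff.2 ⟨rfl, hx⟩

theorem starEval_symm_apply (he : IsHomeomorph (starEval S W)) (p : G × X) :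
    (he.homeomorph.symm p).1.1 = p.1 ∧ (he.homeomorph.symm p).1.2.1.1 p.1 = some p.2 := by
  obtain ⟨h₁, h₂⟩ := starEval_eq_iff.1 (he.homeomorph.apply_symm_apply p)
  exact ⟨h₁, h₁ ▸ h₂⟩

theorem continuous_starEval [LocallyCompactSpace G] : Continuous (starEval S W) :=
  (continuous_fst.comp continuous_subtype_val).prodMk <| continuous_option_get
    ((continuous_subtype_val.comp (continuous_subtype_val.comp
      (continuous_snd.comp continuous_subtype_val))).eval
      (continuous_fst.comp continuous_subtype_val)) _

theorem starEval_bijective (hex : ExistenceAxiom S univ) (huniq : UniquenessAxiom S univ) :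
    Function.Bijective (starEval S univ) := by
  refine ⟨fun q q' hqq' => ?_, fun p => ?_⟩
  · obtain ⟨hq₁, hq₂⟩ := starEval_eq_iff.1 (rfl : starEval S univ q = _)
    obtain ⟨hq₁', hq₂'⟩ := starEval_eq_iff.1 hqq'.symm
    exact Subtype.ext <| huniq _ trivial
      ⟨q.2.1, _, hq₂, Prod.ext hq₁ rfl⟩ ⟨q'.2.1, _, hq₂', Prod.ext hq₁' rfl⟩
  · obtain ⟨q, hqS, x, hx, hqp⟩ := hex p trivial
    rw [mem_singleton_iff] at hqp
    subst hqp
    exact ⟨⟨q, hqS, x, hx, trivial⟩, starEval_eq hx⟩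

theorem starEval_preimage (K : Set (G × X)) :
    starEval S W ⁻¹' K = Subtype.val ⁻¹' star S K := by
  ext q
  refine ⟨fun hq => ⟨q.2.1, _, (starEval_eq_iff.1 rfl).2, hq⟩, ?_⟩
  rintro ⟨-, x, hx, hxK⟩
  rwa [mem_preimage, starEval_eq hx]

theorem isProperMap_starEval [LocallyCompactSpace G] [T2Space G] [T2Space X]
    [CompactlyGeneratedSpace (G × X)] (hcomp : CompactnessAxiom S) :
    IsProperMap (starEval S univ) := by
  refine isProperMap_iff_isCompact_preimage.2 ⟨continuous_starEval, fun K hK => ?_⟩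
  rw [starEval_preimage, IsEmbedding.subtypeVal.isCompact_iff, Subtype.image_preimage_coe,
    inter_eq_self_of_subset_right (star_mono (subset_univ K))]
  exact hcomp K hK

theorem isHomeomorph_starEval [LocallyCompactSpace G] [T2Space G] [T2Space X]
    [CompactlyGeneratedSpace (G × X)] (hcomp : CompactnessAxiom S)
    (hex : ExistenceAxiom S univ) (huniq : UniquenessAxiom S univ) :
    IsHomeomorph (starEval S univ) :=
  isHomeomorph_iff_continuous_isClosedMap_bijective.2
    ⟨continuous_starEval, (isProperMap_starEval hcomp).isClosedMap, starEval_bijective hex huniq⟩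

end Evaluation

section Isomorphism

variable {G X : Type*} [TopologicalSpace G] [TopologicalSpace X] {S S' : Set (Cs G X)}

def starUnivHomeomorphProd (hdom : ∀ φ ∈ S, dom φ.1 = univ) : star S univ ≃ₜ G × S where
  toFun q := (q.1.1, ⟨q.1.2, q.2.1⟩)
  invFun p := ⟨(p.1, p.2.1), mem_star_univ p.2.2 (by rw [hdom _ p.2.2]; trivial)⟩
  left_inv _ := rfl
  right_inv _ := rfl
  continuous_toFun := by fun_prop
  continuous_invFun := by fun_prop

noncomputable def evalAtHomeomorph (g₀ : G) (hdom : ∀ φ ∈ S, dom φ.1 = univ)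
    (he : IsHomeomorph (starEval S univ)) : S ≃ₜ X where
  toFun φ := (φ.1.1.1 g₀).get (isSome_of_dom_eq_univ (hdom _ φ.2) g₀)
  invFun x := ⟨(he.homeomorph.symm (g₀, x)).1.2, (he.homeomorph.symm (g₀, x)).2.1⟩
  left_inv φ :=
    let q : star S univ := ⟨(g₀, φ.1), mem_star_univ φ.2 (hdom _ φ.2 ▸ trivial)⟩
    Subtype.ext (congrArg (·.1.2) (he.homeomorph.symm_apply_apply q))
  right_inv x :=
    Option.some_injective _ ((Option.some_get _).trans (starEval_symm_apply he (g₀, x)).2)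
  continuous_toFun := continuous_option_get ((continuous_eval_const g₀).comp (by fun_prop)) _
  continuous_invFun := by fun_prop

def StarIso.ofIsEmpty [IsEmpty X] (S S' : Set (Cs G X)) (W W' : Set (G × X)) :
    StarIso S W S' W' where
  H := .empty
  k := .empty
  η := .empty
  ev_comm q := isEmptyElim q
  p_comm q := isEmptyElim q

noncomputable def StarIso.ofIsHomeomorphStarEval (g₀ : G) (hdom : ∀ φ ∈ S, dom φ.1 = univ)
    (hdom' : ∀ φ ∈ S', dom φ.1 = univ) (he : IsHomeomorph (starEval S univ))
    (he' : IsHomeomorph (starEval S' univ)) : StarIso S univ S' univ :=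
  let η := (evalAtHomeomorph g₀ hdom he).trans (evalAtHomeomorph g₀ hdom' he').symm
  let H := (starUnivHomeomorphProd hdom).trans
    (((Homeomorph.refl G).prodCongr η).trans (starUnivHomeomorphProd hdom').symm)
  { H, η
    k := ((Homeomorph.Set.univ _).trans (he.homeomorph.symm.trans (H.trans he'.homeomorph))).trans
      (Homeomorph.Set.univ _).symm
    ev_comm := fun q x hx _ x' hx' => by
      change starEval S' univ (H (he.homeomorph.symm (q.1.1, x))) = _
      rw [← starEval_eq hx, ← IsHomeomorph.homeomorph_apply _ he, Homeomorph.symm_apply_apply]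
      exact starEval_eq hx'
    p_comm := fun _ => rfl }

end Isomorphism

section ConstantMaps

variable {G X : Type*} [TopologicalSpace G] [TopologicalSpace X]

def constMaps (G X : Type*) [TopologicalSpace G] [TopologicalSpace X] : Set (Cs G X) :=
  {φ | ∃ x : X, ∀ g : G, φ.1.1 g = some x}

theorem dom_eq_univ_of_mem_constMaps : ∀ φ ∈ constMaps G X, dom φ.1 = univ := by
  rintro φ ⟨x, hx⟩
  exact eq_univ_of_forall fun g => by simp [dom, hx g]

theorem uniquenessAxiom_constMaps (W : Set (G × X)) : UniquenessAxiom (constMaps G X) W := by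
  rintro p - ⟨g, φ⟩ ⟨⟨y, hy⟩, x, hx, hp⟩ ⟨g', ψ⟩ ⟨⟨y', hy'⟩, x', hx', hp'⟩
  simp only [mem_singleton_iff, Prod.ext_iff] at hp hp'
  obtain rfl : y = x := Option.some_injective _ ((hy g).symm.trans hx)
  obtain rfl : y' = x' := Option.some_injective _ ((hy' g').symm.trans hx')
  exact Prod.ext (hp.1.trans hp'.1.symm) (Cs.ext fun h => by rw [hy, hy', hp.2, hp'.2])

variable [ConnectedSpace G]

theorem maximallyDefined_of_dom_eq_univ {φ : Cp G X} (h : dom φ = univ) : MaximallyDefined φ :=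
  ⟨h ▸ isConnected_univ, fun _ _ _ hφψ =>
    Subtype.ext (ContinuousMap.ext fun g => hφψ g (h ▸ trivial))⟩

def constCs (x : X) : Cs G X :=
  ⟨⟨ContinuousMap.const G (some x), ⟨Classical.arbitrary G, Option.some_ne_none x⟩⟩,
    maximallyDefined_of_dom_eq_univ (eq_univ_of_forall fun _ => Option.some_ne_none x)⟩

theorem constCs_mem_constMaps (x : X) : constCs x ∈ constMaps G X := ⟨x, fun _ => rfl⟩

theorem continuous_constCs : Continuous (constCs : X → Cs G X) :=
  .subtype_mk (.subtype_mk (ContinuousMap.continuous_const'.comp isInducing_some.continuous) _) _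

theorem existenceAxiom_constMaps (W : Set (G × X)) : ExistenceAxiom (constMaps G X) W :=
  fun p _ => ⟨(p.1, constCs p.2), constCs_mem_constMaps p.2, p.2, rfl, rfl⟩

theorem star_constMaps (K : Set (G × X)) :
    star (constMaps G X) K = (fun p => (p.1, constCs p.2)) '' K := by
  ext ⟨g, φ⟩
  constructor
  · rintro ⟨⟨y, hy⟩, x, hx, hK⟩
    obtain rfl : y = x := Option.some_injective _ ((hy g).symm.trans hx)
    exact ⟨(g, y), hK, Prod.ext rfl (Cs.ext fun h => (hy h).symm)⟩
  · rintro ⟨⟨g', x⟩, hK, h⟩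
    obtain ⟨rfl, rfl⟩ := Prod.mk.inj h
    exact ⟨constCs_mem_constMaps x, x, rfl, hK⟩

theorem compactnessAxiom_constMaps : CompactnessAxiom (constMaps G X) := fun K hK =>
  star_constMaps K ▸ hK.image (continuous_fst.prodMk (continuous_constCs.comp continuous_snd))

end ConstantMaps

end Yorke

namespace Yorke

variable {G X : Type*} [Group G] [TopologicalSpace G] [IsTopologicalGroup G]
  [LocallyCompactSpace G] [SecondCountableTopology G] [T2Space G]
  [MetricSpace X] [SecondCountableTopology X]

theorem statement_14_general (S : Set (Cs G X))
    (hcomp : CompactnessAxiom S) (hex : ExistenceAxiom S Set.univ)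
    (huniq : UniquenessAxiom S Set.univ)
    (hdom : ∀ φ : Cs G X, φ ∈ S → dom φ.1 = Set.univ) :
    Nonempty (StarIso S (Set.univ : Set (G × X))
      {φ : Cs G X | ∃ x : X, ∀ g : G, φ.1.1 g = some x} (Set.univ : Set (G × X))) := by
  rcases isEmpty_or_nonempty X with _ | ⟨⟨x₀⟩⟩
  · exact ⟨.ofIsEmpty _ _ _ _⟩
  obtain ⟨⟨_, φ⟩, hφ, -⟩ := hex (1, x₀) trivial
  have : ConnectedSpace G := connectedSpace_iff_univ.2 (hdom φ hφ ▸ φ.2.1)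
  exact ⟨.ofIsHomeomorphStarEval 1 hdom dom_eq_univ_of_mem_constMaps
    (isHomeomorph_starEval hcomp hex huniq)
    (isHomeomorph_starEval compactnessAxiom_constMaps (existenceAxiom_constMaps _)
      (uniquenessAxiom_constMaps _))⟩

/-- A `σ`-invariant `S` satisfying the axioms with domain `G` has `S*(G×X)` isomorphic to
`S₀*(G×X)`, where `S₀` is the set of constant maps. -/
theorem statement_14 [LocallyCompactSpace X] (S : Set (Cs G X)) (hσ : SigmaInvariant S)
    (hcomp : CompactnessAxiom S) (hex : ExistenceAxiom S Set.univ)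
    (huniq : UniquenessAxiom S Set.univ)
    (hdom : ∀ φ : Cs G X, φ ∈ S → dom φ.1 = Set.univ) :
    Nonempty (StarIso S (Set.univ : Set (G × X))
      {φ : Cs G X | ∃ x : X, ∀ g : G, φ.1.1 g = some x} (Set.univ : Set (G × X))) :=
  statement_14_general S hcomp hex huniq hdom

end Yorke
end

section
/- Let the star-constructions S*W and (S')*W' be isomorphic via phase space-preserving isomorphisms, where W ⊆ G × X and W' ⊆ G' × X' are open. Then the induced map ĥ: Ŵ → Ŵ' is a homeomorphism, and for each x ∈ Ŵ the slice W_x := {g ∈ G : (g,x) ∈ W} is homeomorphic to the slice W'_{ĥ(x)} := {g' ∈ G' : (g',ĥ(x)) ∈ W'} via the map g ↦ τ(g,x). -/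
open Set Filter Topology TopologicalSpace

/-!
Because `k = (τ, h)` preserves phase space, `k` descends along the projections `W → Ŵ` and
`W' → Ŵ'` (`phaseProj`) to the map `ĥ` (`phaseMap`), and `k⁻¹` descends to its inverse. For
open `W` these projections are open quotient maps, so both descended maps are continuous.
Over `x ∈ Ŵ`, `k` carries the fibre `W_x × {x}` onto `W'_{ĥ(x)} × {ĥ(x)}` and `k⁻¹` carries it
back, so `k` restricts to a homeomorphism of the slices.
-/

namespace Yorke

section PhaseSpace

variable {A B A' B' : Type*} {W : Set (A × B)} {W' : Set (A' × B')}

def phaseSpace (W : Set (A × B)) : Set B := {x | ∃ g, (g, x) ∈ W}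

def phaseProj (W : Set (A × B)) (w : W) : phaseSpace W := ⟨(w : A × B).2, (w : A × B).1, w.2⟩

theorem phaseProj_surjective : Function.Surjective (phaseProj W) :=
  fun ⟨x, g, h⟩ => ⟨⟨(g, x), h⟩, rfl⟩

variable [TopologicalSpace A] [TopologicalSpace B] [TopologicalSpace A'] [TopologicalSpace B']

theorem continuous_phaseProj : Continuous (phaseProj W) :=
  (continuous_snd.comp continuous_subtype_val).subtype_mk _

theorem isOpenQuotientMap_phaseProj (hW : IsOpen W) : IsOpenQuotientMap (phaseProj W) :=
  ⟨phaseProj_surjective, continuous_phaseProj,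
    (isOpenMap_snd.comp hW.isOpenMap_subtype_val).codRestrict _⟩

noncomputable def phaseMap (k : W → W') : phaseSpace W → phaseSpace W' :=
  phaseProj W' ∘ k ∘ Function.surjInv phaseProj_surjective

theorem phaseMap_phaseProj {k : W → W'} (hk : PreservesPhase k) (w : W) :
    phaseMap k (phaseProj W w) = phaseProj W' (k w) :=
  Subtype.ext <| hk _ _ <| congrArg Subtype.val <| Function.surjInv_eq phaseProj_surjective _

theorem continuous_phaseMap (hW : IsOpen W) {k : W → W'} (hk : PreservesPhase k)
    (hkc : Continuous k) : Continuous (phaseMap k) := by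
  rw [← (isOpenQuotientMap_phaseProj hW).continuous_comp_iff,
    show phaseMap k ∘ phaseProj W = phaseProj W' ∘ k from funext (phaseMap_phaseProj hk)]
  exact continuous_phaseProj.comp hkc

noncomputable def phaseHomeomorph (hW : IsOpen W) (hW' : IsOpen W') (k : W ≃ₜ W')
    (hk : PreservesPhase k) (hk' : PreservesPhase k.symm) : phaseSpace W ≃ₜ phaseSpace W' where
  toFun := phaseMap k
  invFun := phaseMap k.symm
  left_inv := phaseProj_surjective.forall.2 fun w => by
    rw [phaseMap_phaseProj hk, phaseMap_phaseProj hk', k.symm_apply_apply]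
  right_inv := phaseProj_surjective.forall.2 fun w => by
    rw [phaseMap_phaseProj hk', phaseMap_phaseProj hk, k.apply_symm_apply]
  continuous_toFun := continuous_phaseMap hW hk k.continuous
  continuous_invFun := continuous_phaseMap hW' hk' k.symm.continuous

def sliceHomeomorphFiber (W : Set (A × B)) (x : B) :
    {g | (g, x) ∈ W} ≃ₜ {w : W // (w : A × B).2 = x} where
  toFun g := ⟨⟨(g, x), g.2⟩, rfl⟩
  invFun w := ⟨(w.1 : A × B).1, by obtain ⟨⟨_, h⟩, rfl⟩ := w; exact h⟩
  left_inv _ := rfl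
  right_inv w := Subtype.ext <| Subtype.ext <| Prod.ext rfl w.2.symm
  continuous_toFun := by fun_prop
  continuous_invFun := by fun_prop

def sliceHomeomorph (k : W ≃ₜ W') {x : B} {x' : B'}
    (hk : ∀ w : W, (w : A × B).2 = x → (k w : A' × B').2 = x')
    (hk' : ∀ w' : W', (w' : A' × B').2 = x' → (k.symm w' : A × B).2 = x) :
    {g | (g, x) ∈ W} ≃ₜ {g' | (g', x') ∈ W'} :=
  (sliceHomeomorphFiber W x).trans <| (k.subtype fun w => ⟨hk w, fun h => by
    simpa using hk' (k w) h⟩).trans (sliceHomeomorphFiber W' x').symm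

theorem sliceHomeomorph_apply (k : W ≃ₜ W') {x : B} {x' : B'}
    (hk : ∀ w : W, (w : A × B).2 = x → (k w : A' × B').2 = x')
    (hk' : ∀ w' : W', (w' : A' × B').2 = x' → (k.symm w' : A × B).2 = x)
    (g : {g | (g, x) ∈ W}) :
    (sliceHomeomorph k hk hk' g : A') = (k ⟨(g, x), g.2⟩ : A' × B').1 :=
  rfl

end PhaseSpace

variable {G X : Type*} [Group G] [TopologicalSpace G] [IsTopologicalGroup G]
  [LocallyCompactSpace G] [SecondCountableTopology G] [T2Space G]
  [MetricSpace X] [SecondCountableTopology X]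

variable {G' X' : Type*} [Group G'] [TopologicalSpace G'] [IsTopologicalGroup G']
  [LocallyCompactSpace G'] [SecondCountableTopology G'] [T2Space G']
  [MetricSpace X'] [SecondCountableTopology X']

theorem statement_15_general (S : Set (Cs G X)) (S' : Set (Cs G' X'))
    (W : Set (G × X)) (W' : Set (G' × X')) (hWopen : IsOpen W) (hW'open : IsOpen W')
    (iso : StarIso S W S' W')
    (hk' : PreservesPhase iso.k.symm)
    (hh : X → X')
    (hhdef : ∀ (g : G) (x : X) (hgx : (g, x) ∈ W),
      hh x = ((iso.k ⟨(g, x), hgx⟩ : ↥W') : G' × X').2) :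
    (∀ x ∈ {x : X | ∃ g : G, (g, x) ∈ W}, hh x ∈ {x' : X' | ∃ g' : G', (g', x') ∈ W'}) ∧
    (∃ e : ↥{x : X | ∃ g : G, (g, x) ∈ W} ≃ₜ ↥{x' : X' | ∃ g' : G', (g', x') ∈ W'},
      ∀ w : ↥{x : X | ∃ g : G, (g, x) ∈ W}, ((e w) : X') = hh (w : X)) ∧
    ∀ x : X, (∃ g : G, (g, x) ∈ W) →
      ∃ e : ↥{g : G | (g, x) ∈ W} ≃ₜ ↥{g' : G' | (g', hh x) ∈ W'},
        ∀ (g : G) (hg : (g, x) ∈ W),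
          ((e ⟨g, hg⟩) : G') = ((iso.k ⟨(g, x), hg⟩ : ↥W') : G' × X').1 := by
  have hk : PreservesPhase iso.k := by
    rintro ⟨⟨g, x⟩, hgx⟩ ⟨⟨g', _⟩, hgx'⟩ rfl
    exact (hhdef g x hgx).symm.trans (hhdef g' x hgx')
  let e := phaseHomeomorph hWopen hW'open iso.k hk hk'
  have he : ∀ x : phaseSpace W, (e x : X') = hh x :=
    phaseProj_surjective.forall.2 fun ⟨⟨g, x⟩, hgx⟩ => by
      change (phaseMap iso.k (phaseProj W _) : X') = _
      rw [phaseMap_phaseProj hk]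
      exact (hhdef g x hgx).symm
  refine ⟨fun x hx => by rw [← he ⟨x, hx⟩]; exact (e _).2, ⟨e, he⟩, ?_⟩
  rintro x ⟨g₀, hg₀⟩
  refine ⟨sliceHomeomorph iso.k (x' := hh x) ?_ ?_, fun g hg => sliceHomeomorph_apply _ _ _ ⟨g, hg⟩⟩
  · rintro ⟨⟨g, _⟩, hgx⟩ rfl
    exact (hhdef g _ hgx).symm
  · intro w' hw'
    rw [hk' w' (iso.k ⟨(g₀, x), hg₀⟩) (hw'.trans (hhdef g₀ x hg₀)), iso.k.symm_apply_apply]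

/-- For a phase space-preserving isomorphism between `S*W` and `S'*W'` with `W`, `W'`
open, the induced map `ĥ : Ŵ → Ŵ'` is a homeomorphism, and each slice `W_x` is
homeomorphic to the slice `W'_{ĥ(x)}` via `g ↦ τ(g,x)`. -/
theorem statement_15 (S : Set (Cs G X)) (S' : Set (Cs G' X'))
    (W : Set (G × X)) (W' : Set (G' × X')) (hWopen : IsOpen W) (hW'open : IsOpen W')
    (iso : StarIso S W S' W') (hk : PreservesPhase iso.k)
    (hk' : PreservesPhase iso.k.symm)
    (hh : X → X')
    (hhdef : ∀ (g : G) (x : X) (hgx : (g, x) ∈ W),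
      hh x = ((iso.k ⟨(g, x), hgx⟩ : ↥W') : G' × X').2) :
    (∀ x ∈ {x : X | ∃ g : G, (g, x) ∈ W}, hh x ∈ {x' : X' | ∃ g' : G', (g', x') ∈ W'}) ∧
    (∃ e : ↥{x : X | ∃ g : G, (g, x) ∈ W} ≃ₜ ↥{x' : X' | ∃ g' : G', (g', x') ∈ W'},
      ∀ w : ↥{x : X | ∃ g : G, (g, x) ∈ W}, ((e w) : X') = hh (w : X)) ∧
    ∀ x : X, (∃ g : G, (g, x) ∈ W) →
      ∃ e : ↥{g : G | (g, x) ∈ W} ≃ₜ ↥{g' : G' | (g', hh x) ∈ W'},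
        ∀ (g : G) (hg : (g, x) ∈ W),
          ((e ⟨g, hg⟩) : G') = ((iso.k ⟨(g, x), hg⟩ : ↥W') : G' × X').1 :=
  statement_15_general S S' W W' hWopen hW'open iso hk' hh hhdef

end Yorke
end

section
/- Let the star-constructions S*(G×X) and (S')*(G'×X') be isomorphic via phase space-preserving isomorphisms, where S and S' are σ-invariant, with induced homeomorphism ĥ: X → X'. Then A ⊆ X is weakly invariant with respect to S if and only if ĥ(A) is weakly invariant with respect to S'. In particular, x₀ ∈ X is an equilibrium of S if and only if ĥ(x₀) is an equilibrium of S'. -/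
/-!
The map `η` is a bijection `S ≃ S'`, and `ev ∘ H = k ∘ ev` says that `k` carries the graph of
each `φ ∈ S` onto the graph of `η φ`; as `k` preserves phase space, `O(η φ) = ĥ(O(φ))`.
By `σ`-invariance any point of an orbit can be moved to time `e`, so weak invariance and being
an equilibrium only depend on the orbits of `S`, which `ĥ` transports injectively to those of `S'`.
-/

open Set Filter Topology TopologicalSpace

namespace Yorke

variable {G X : Type*} [TopologicalSpace G] [TopologicalSpace X]

section Shift

variable {G X : Type*} [TopologicalSpace X] [Group G] [TopologicalSpace G] [IsTopologicalGroup G]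

theorem orbit_eq_of_val_eq_shift {φ χ : Cs G X} {g : G} (hχ : χ.1 = shift g φ.1) :
    orbit χ = orbit φ := by
  ext x
  constructor
  · rintro ⟨a, ha⟩
    rw [hχ] at ha
    exact ⟨a * g, ha⟩
  · rintro ⟨a, ha⟩
    refine ⟨a * g⁻¹, ?_⟩
    rw [hχ]
    simpa [shift] using ha

theorem SigmaInvariant.exists_apply_one_eq_of_mem_orbit {S : Set (Cs G X)}
    (hS : SigmaInvariant S) {φ : Cs G X} (hφ : φ ∈ S) {x : X} (hx : x ∈ orbit φ) :
    ∃ χ ∈ S, χ.1.1 (1 : G) = some x ∧ orbit χ = orbit φ := by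
  obtain ⟨g, hg⟩ := hx
  obtain ⟨χ, hχS, hχ⟩ := hS g φ hφ
  refine ⟨χ, hχS, ?_, orbit_eq_of_val_eq_shift hχ⟩
  rw [hχ]
  simpa [shift] using hg

theorem SigmaInvariant.weaklyInvariant_iff {S : Set (Cs G X)} (hS : SigmaInvariant S)
    (A : Set X) : WeaklyInvariant S A ↔ ∀ x ∈ A, ∃ φ ∈ S, x ∈ orbit φ ∧ orbit φ ⊆ A := by
  refine forall₂_congr fun x _ => ⟨?_, ?_⟩
  · rintro ⟨φ, hφ, hφ1, hφA⟩
    exact ⟨φ, hφ, ⟨1, hφ1⟩, hφA⟩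
  · rintro ⟨φ, hφ, hxφ, hφA⟩
    obtain ⟨χ, hχ, hχ1, hχφ⟩ := hS.exists_apply_one_eq_of_mem_orbit hφ hxφ
    exact ⟨χ, hχ, hχ1, hχφ ▸ hφA⟩

theorem SigmaInvariant.equilibrium_iff {S : Set (Cs G X)} (hS : SigmaInvariant S) (x : X) :
    Equilibrium S x ↔ ∃ φ ∈ S, orbit φ = {x} := by
  constructor
  · rintro ⟨φ, hφ, -, hφx⟩
    exact ⟨φ, hφ, hφx⟩
  · rintro ⟨φ, hφ, hφx⟩
    obtain ⟨χ, hχ, hχ1, hχφ⟩ := hS.exists_apply_one_eq_of_mem_orbit hφ (hφx ▸ mem_singleton x)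
    exact ⟨χ, hχ, hχ1, hχφ.trans hφx⟩

end Shift

section StarIso

variable {G X G' X' : Type*} [TopologicalSpace G] [TopologicalSpace X]
  [TopologicalSpace G'] [TopologicalSpace X']

/-- `h` is the map `ĥ` induced by a phase space-preserving `k = (τ, h)`. -/
def IsPhaseMap (k : ↥(univ : Set (G × X)) → ↥(univ : Set (G' × X'))) (h : X → X') : Prop :=
  ∀ (g : G) (x : X), h x = ((k ⟨(g, x), mem_univ _⟩ : ↥(univ : Set (G' × X'))) : G' × X').2

theorem IsPhaseMap.injective [Nonempty G]
    {k : ↥(univ : Set (G × X)) ≃ₜ ↥(univ : Set (G' × X'))} {h : X → X'}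
    (hh : IsPhaseMap k h) (hk : PreservesPhase k.symm) : Function.Injective h := by
  intro x y hxy
  obtain ⟨g⟩ := ‹Nonempty G›
  rw [hh g x, hh g y] at hxy
  simpa using hk _ _ hxy

variable {S : Set (Cs G X)} {W : Set (G × X)} {S' : Set (Cs G' X')} {W' : Set (G' × X')}

def StarIso.symm (iso : StarIso S W S' W') : StarIso S' W' S W where
  H := iso.H.symm
  k := iso.k.symm
  η := iso.η.symm
  ev_comm q' x' hx' hW' x hx := by
    set q := iso.H.symm q'
    have hq : iso.H q = q' := iso.H.apply_symm_apply q'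
    obtain ⟨-, x₀, hx₀, hW⟩ := q.2
    obtain rfl : x₀ = x := Option.some_injective _ (hx₀.symm.trans hx)
    have hk : iso.k ⟨(q.1.1, x₀), hW⟩ = ⟨(q'.1.1, x'), hW'⟩ :=
      Subtype.ext (by rw [iso.ev_comm q x₀ hx₀ hW x' (hq ▸ hx'), hq])
    rw [← hk, Homeomorph.symm_apply_apply]
  p_comm q' := by
    have h := iso.p_comm (iso.H.symm q')
    rw [iso.H.apply_symm_apply] at h
    rw [show (⟨q'.1.2, q'.2.1⟩ : ↥S') = iso.η _ from Subtype.ext h, Homeomorph.symm_apply_apply]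

/-- `k` carries the graph of `φ` into the graph of `η φ`. -/
theorem StarIso.eta_apply_fst_k (iso : StarIso S W S' W') {φ : Cs G X} (hφ : φ ∈ S)
    {g : G} {x : X} (hx : φ.1.1 g = some x) (hW : (g, x) ∈ W) :
    (iso.η ⟨φ, hφ⟩ : Cs G' X').1.1 (iso.k ⟨(g, x), hW⟩ : G' × X').1 =
      some (iso.k ⟨(g, x), hW⟩ : G' × X').2 := by
  set q : ↥(star S W) := ⟨(g, φ), hφ, x, hx, hW⟩
  obtain ⟨-, x', hx', -⟩ := (iso.H q).2
  rw [iso.ev_comm q x hx hW x' hx', ← iso.p_comm q]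
  exact hx'

theorem StarIso.orbit_eta (iso : StarIso S univ S' univ) {h : X → X'} (hh : IsPhaseMap iso.k h)
    {φ : Cs G X} (hφ : φ ∈ S) : orbit (iso.η ⟨φ, hφ⟩ : Cs G' X') = h '' orbit φ := by
  apply Subset.antisymm
  · rintro y ⟨g', hg'⟩
    set w := iso.k.symm ⟨(g', y), mem_univ _⟩
    have hw := iso.symm.eta_apply_fst_k (iso.η ⟨φ, hφ⟩).2 hg' (mem_univ _)
    simp only [StarIso.symm, Subtype.coe_eta, Homeomorph.symm_apply_apply] at hw
    refine ⟨w.1.2, ⟨w.1.1, hw⟩, ?_⟩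
    rw [hh w.1.1]
    simp [w]
  · rintro _ ⟨x, ⟨g, hg⟩, rfl⟩
    exact ⟨_, by rw [hh g x]; exact iso.eta_apply_fst_k hφ hg (mem_univ _)⟩

theorem StarIso.exists_orbit_iff (iso : StarIso S univ S' univ) {h : X → X'}
    (hh : IsPhaseMap iso.k h) (P : Set X' → Prop) :
    (∃ ψ ∈ S', P (orbit ψ)) ↔ ∃ φ ∈ S, P (h '' orbit φ) := by
  constructor
  · rintro ⟨ψ, hψ, hP⟩
    set φ := iso.η.symm ⟨ψ, hψ⟩
    refine ⟨φ, φ.2, ?_⟩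
    rwa [← iso.orbit_eta hh φ.2, Subtype.coe_eta, Homeomorph.apply_symm_apply]
  · rintro ⟨φ, hφ, hP⟩
    exact ⟨_, (iso.η ⟨φ, hφ⟩).2, by rwa [iso.orbit_eta hh hφ]⟩

end StarIso

end Yorke

namespace Yorke

variable {G X : Type*} [Group G] [TopologicalSpace G] [IsTopologicalGroup G]
  [LocallyCompactSpace G] [SecondCountableTopology G] [T2Space G]
  [MetricSpace X] [SecondCountableTopology X]

variable {G' X' : Type*} [Group G'] [TopologicalSpace G'] [IsTopologicalGroup G']
  [LocallyCompactSpace G'] [SecondCountableTopology G'] [T2Space G']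
  [MetricSpace X'] [SecondCountableTopology X']

theorem statement_17_general (S : Set (Cs G X)) (S' : Set (Cs G' X'))
    (hσ : SigmaInvariant S) (hσ' : SigmaInvariant S')
    (iso : StarIso S (Set.univ : Set (G × X)) S' (Set.univ : Set (G' × X')))
    (hk' : PreservesPhase iso.k.symm)
    (hh : X → X')
    (hhdef : ∀ (g : G) (x : X),
      hh x = ((iso.k ⟨(g, x), Set.mem_univ _⟩ : ↥(Set.univ : Set (G' × X'))) : G' × X').2) :
    (∀ A : Set X, WeaklyInvariant S A ↔ WeaklyInvariant S' (hh '' A)) ∧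
    ∀ x₀ : X, Equilibrium S x₀ ↔ Equilibrium S' (hh x₀) := by
  have hinj : Function.Injective hh := IsPhaseMap.injective hhdef hk'
  refine ⟨fun A => ?_, fun x₀ => ?_⟩
  · rw [hσ.weaklyInvariant_iff, hσ'.weaklyInvariant_iff, forall_mem_image]
    refine forall₂_congr fun x _ => ?_
    rw [iso.exists_orbit_iff hhdef fun O => hh x ∈ O ∧ O ⊆ hh '' A]
    simp only [hinj.mem_set_image, image_subset_image_iff hinj]
  · rw [hσ.equilibrium_iff, hσ'.equilibrium_iff, iso.exists_orbit_iff hhdef fun O => O = {hh x₀}]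
    simp only [← image_singleton, (image_injective.2 hinj).eq_iff]

/-- Under a phase space-preserving isomorphism of `σ`-invariant systems, weak invariance
and equilibria correspond via `ĥ`. -/
theorem statement_17 (S : Set (Cs G X)) (S' : Set (Cs G' X'))
    (hσ : SigmaInvariant S) (hσ' : SigmaInvariant S')
    (iso : StarIso S (Set.univ : Set (G × X)) S' (Set.univ : Set (G' × X')))
    (hk : PreservesPhase iso.k) (hk' : PreservesPhase iso.k.symm)
    (hh : X → X')
    (hhdef : ∀ (g : G) (x : X),
      hh x = ((iso.k ⟨(g, x), Set.mem_univ _⟩ : ↥(Set.univ : Set (G' × X'))) : G' × X').2) :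
    (∀ A : Set X, WeaklyInvariant S A ↔ WeaklyInvariant S' (hh '' A)) ∧
    ∀ x₀ : X, Equilibrium S x₀ ↔ Equilibrium S' (hh x₀) :=
  statement_17_general S S' hσ hσ' iso hk' hh hhdef

end Yorke
end

section
/- Let the star-constructions S*(G×X) and (S')*(G'×X') be isomorphic via phase space-preserving isomorphisms with k = (τ,h). For each φ ∈ S, the map D_φ: dom φ → dom η(φ) defined by D_φ(g) := τ(g,φ(g)) is a homeomorphism. Further, if S has domain G and S' has domain G', the map D: S × G → G' defined by D(φ,g) := D_φ(g) is continuous; in particular, if S is path connected, then all maps in the family {D_φ: G → G' : φ ∈ S} are isotopic. -/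
/-!
Since `p ∘ H = η ∘ p`, the homeomorphism `H` carries the fibre of `S*(G×X)` over `φ`, which is
`dom φ`, onto the fibre over `η φ`; by `ev ∘ H = k ∘ ev` the induced map is `D_φ`. When all
domains are full, `D(φ,g)` is the first coordinate of `H(g,φ)`, hence continuous in `(φ,g)`,
and a path from `φ` to `ψ` in `S` sweeps out an isotopy from `D_φ` to `D_ψ`.
-/

open Set Filter Topology TopologicalSpace

namespace Yorke

section Fibers

variable {A B C C' : Type*} [TopologicalSpace A] [TopologicalSpace B]

def _root_.Homeomorph.restrictFibers (e : A ≃ₜ B) {π : A → C} {π' : B → C'} (η : C ≃ C')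
    (he : ∀ a, π' (e a) = η (π a)) (c : C) : {a // π a = c} ≃ₜ {b // π' b = η c} :=
  e.subtype fun a => by rw [he, η.injective.eq_iff]

end Fibers

section Star

variable {G X : Type*} [TopologicalSpace G] [TopologicalSpace X] {S : Set (Cs G X)}
  {W : Set (G × X)}

def starProj (q : star S W) : S := ⟨q.1.2, q.2.1⟩

theorem mem_star_univ_iff {φ : Cs G X} {g : G} :
    (g, φ) ∈ star S univ ↔ φ ∈ S ∧ g ∈ dom φ.1 := by
  simp [star, dom, Option.ne_none_iff_exists']

def starFiberHomeo (φ : S) : dom φ.1.1 ≃ₜ {q : star S univ // starProj q = φ} where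
  toFun g := ⟨⟨(g, φ), mem_star_univ_iff.2 ⟨φ.2, g.2⟩⟩, rfl⟩
  invFun q := ⟨q.1.1.1, by obtain ⟨q, rfl⟩ := q; exact (mem_star_univ_iff.1 q.2).2⟩
  left_inv _ := rfl
  right_inv q := by obtain ⟨⟨⟨g, ψ⟩, hq⟩, rfl⟩ := q; rfl
  continuous_toFun := by fun_prop
  continuous_invFun := by fun_prop

end Star

namespace StarIso

variable {G X G' X' : Type*} [TopologicalSpace G] [TopologicalSpace X]
  [TopologicalSpace G'] [TopologicalSpace X'] {S : Set (Cs G X)} {S' : Set (Cs G' X')}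

section

variable {W : Set (G × X)} {W' : Set (G' × X')} (iso : StarIso S W S' W')

theorem starProj_H (q : star S W) : starProj (iso.H q) = iso.η (starProj q) :=
  Subtype.ext (iso.p_comm q)

theorem fst_H {q : star S W} {x : X} (hx : q.1.2.1.1 q.1.1 = some x) (hW : (q.1.1, x) ∈ W) :
    (iso.H q).1.1 = (iso.k ⟨(q.1.1, x), hW⟩).1.1 := by
  obtain ⟨-, x', hx', -⟩ := (iso.H q).2
  rw [iso.ev_comm q x hx hW x' hx']

end

variable (iso : StarIso S univ S' univ)

/-- The paper's `D_φ`: `H` restricted to the fibres over `φ` and `η φ`. -/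
def domHomeo (φ : S) : dom φ.1.1 ≃ₜ dom (iso.η φ).1.1 :=
  (starFiberHomeo φ).trans <|
    (iso.H.restrictFibers iso.η.toEquiv iso.starProj_H φ).trans (starFiberHomeo (iso.η φ)).symm

theorem domHomeo_apply (φ : S) (g : dom φ.1.1) :
    (iso.domHomeo φ g : G') = (iso.H ⟨(g, φ), mem_star_univ_iff.2 ⟨φ.2, g.2⟩⟩).1.1 :=
  rfl

end StarIso

section Isotopy

variable {A B : Type*} [TopologicalSpace A] [TopologicalSpace B]

theorem isHomeomorph_of_homeomorph_univ {s : Set A} {t : Set B} (hs : s = univ)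
    (ht : t = univ) (e : s ≃ₜ t) {f : A → B} (hf : ∀ a (ha : a ∈ s), f a = e ⟨a, ha⟩) :
    IsHomeomorph f := by
  subst hs ht
  have : f = ((Homeomorph.Set.univ A).symm.trans (e.trans (Homeomorph.Set.univ B))) :=
    funext fun a => hf a trivial
  exact this ▸ Homeomorph.isHomeomorph _

theorem isotopic_of_joined {P : Type*} [TopologicalSpace P] {D : P × A → B} (hD : Continuous D)
    (hhomeo : ∀ p, IsHomeomorph fun a => D (p, a)) {p q : P} (hpq : Joined p q) :
    Isotopic (fun a => D (p, a)) (fun a => D (q, a)) := by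
  obtain ⟨γ⟩ := hpq
  exact ⟨fun s => D (γ s.1, s.2), by fun_prop, by simp, by simp, fun s => hhomeo (γ s)⟩

end Isotopy

variable {G X : Type*} [Group G] [TopologicalSpace G] [IsTopologicalGroup G]
  [LocallyCompactSpace G] [SecondCountableTopology G] [T2Space G]
  [MetricSpace X] [SecondCountableTopology X]

variable {G' X' : Type*} [Group G'] [TopologicalSpace G'] [IsTopologicalGroup G']
  [LocallyCompactSpace G'] [SecondCountableTopology G'] [T2Space G']
  [MetricSpace X'] [SecondCountableTopology X']

theorem statement_18_general (S : Set (Cs G X)) (S' : Set (Cs G' X'))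
    (iso : StarIso S (Set.univ : Set (G × X)) S' (Set.univ : Set (G' × X'))) :
    (∀ φ : ↥S,
      ∃ e : ↥(dom (φ : Cs G X).1) ≃ₜ ↥(dom ((iso.η φ : ↥S') : Cs G' X').1),
        ∀ (g : G) (hg : g ∈ dom (φ : Cs G X).1) (x : X), (φ : Cs G X).1.1 g = some x →
          ((e ⟨g, hg⟩) : G') =
            ((iso.k ⟨(g, x), Set.mem_univ _⟩ : ↥(Set.univ : Set (G' × X'))) : G' × X').1) ∧
    ((∀ φ : Cs G X, φ ∈ S → dom φ.1 = Set.univ) →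
      (∀ φ' : Cs G' X', φ' ∈ S' → dom φ'.1 = Set.univ) →
      ∀ D : ↥S × G → G',
        (∀ (φ : ↥S) (g : G) (x : X), (φ : Cs G X).1.1 g = some x →
          D (φ, g) =
            ((iso.k ⟨(g, x), Set.mem_univ _⟩ : ↥(Set.univ : Set (G' × X'))) : G' × X').1) →
        Continuous D ∧
          (IsPathConnected S → ∀ φ ψ : ↥S,
            Isotopic (fun g : G => D (φ, g)) (fun g : G => D (ψ, g)))) := by
  refine ⟨fun φ => ⟨iso.domHomeo φ, fun g hg x hx =>
    (iso.domHomeo_apply φ ⟨g, hg⟩).trans (iso.fst_H hx (mem_univ _))⟩, fun hdom hdom' D hD => ?_⟩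
  have mem_dom (φ : S) (g : G) : g ∈ dom φ.1.1 := hdom φ φ.2 ▸ mem_univ g
  have hD_eq (φ : S) (g : G) : D (φ, g) = iso.domHomeo φ ⟨g, mem_dom φ g⟩ := by
    obtain ⟨x, hx⟩ := Option.ne_none_iff_exists'.mp (mem_dom φ g)
    rw [hD φ g x hx, iso.domHomeo_apply, iso.fst_H hx]
  have hcont : Continuous D := by
    rw [show D = fun p : S × G =>
        (iso.H ⟨(p.2, p.1), mem_star_univ_iff.2 ⟨p.1.2, mem_dom p.1 p.2⟩⟩).1.1 from
      funext fun p => hD_eq p.1 p.2]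
    fun_prop
  have hhomeo (φ : S) : IsHomeomorph fun g => D (φ, g) :=
    isHomeomorph_of_homeomorph_univ (hdom φ φ.2) (hdom' _ (iso.η φ).2) (iso.domHomeo φ)
      fun g _ => hD_eq φ g
  exact ⟨hcont, fun hS φ ψ =>
    isotopic_of_joined hcont hhomeo (hS.joinedIn _ φ.2 _ ψ.2).joined_subtype⟩

/-- For a phase space-preserving isomorphism, each `D_φ : dom φ → dom η(φ)`,
`D_φ(g) = τ(g,φ(g))`, is a homeomorphism; if moreover `S`, `S'` have domains `G`, `G'`,
then `D(φ,g) := D_φ(g)` is continuous on `S × G`, and if `S` is path connected all the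
maps `D_φ` are isotopic. -/
theorem statement_18 (S : Set (Cs G X)) (S' : Set (Cs G' X'))
    (iso : StarIso S (Set.univ : Set (G × X)) S' (Set.univ : Set (G' × X')))
    (hk : PreservesPhase iso.k) (hk' : PreservesPhase iso.k.symm) :
    (∀ φ : ↥S,
      ∃ e : ↥(dom (φ : Cs G X).1) ≃ₜ ↥(dom ((iso.η φ : ↥S') : Cs G' X').1),
        ∀ (g : G) (hg : g ∈ dom (φ : Cs G X).1) (x : X), (φ : Cs G X).1.1 g = some x →
          ((e ⟨g, hg⟩) : G') =
            ((iso.k ⟨(g, x), Set.mem_univ _⟩ : ↥(Set.univ : Set (G' × X'))) : G' × X').1) ∧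
    ((∀ φ : Cs G X, φ ∈ S → dom φ.1 = Set.univ) →
      (∀ φ' : Cs G' X', φ' ∈ S' → dom φ'.1 = Set.univ) →
      ∀ D : ↥S × G → G',
        (∀ (φ : ↥S) (g : G) (x : X), (φ : Cs G X).1.1 g = some x →
          D (φ, g) =
            ((iso.k ⟨(g, x), Set.mem_univ _⟩ : ↥(Set.univ : Set (G' × X'))) : G' × X').1) →
        Continuous D ∧
          (IsPathConnected S → ∀ φ ψ : ↥S,
            Isotopic (fun g : G => D (φ, g)) (fun g : G => D (ψ, g)))) :=
  statement_18_general S S' iso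

end Yorke
end
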